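/- Let T be a local O-algebra, finite as an O-module (not necessarily flat), such that T_K is semisimple, and let λ : T → O be a surjective O-algebra homomorphism with ℘_λ := Ker λ. Then Fitt_O(℘_λ/℘_λ²) ⊆ η_λ, where η_λ := λ(Ann_T(℘_λ)). -/

import Mathlib

open nonZeroDivisors

noncomputable section

/-- The `0`-th Fitting ideal of an `O`-module: the ideal generated by the determinants of
all square matrices of relations among finite generating families. -/
def fittingIdeal (O : Type) [CommRing O] (M : Type) [AddCommGroup M] [Module O M] : Ideal O :=
  Ideal.span { d : O | ∃ (n : ℕ) (g : Fin n → M) (B : Matrix (Fin n) (Fin n) O),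
    Submodule.span O (Set.range g) = ⊤ ∧ (∀ j, (∑ i, B i j • g i) = 0) ∧ d = B.det }

/-- For a surjective `O`-algebra homomorphism `λ : T → O`, the congruence ideal
`η_λ = λ(Ann_T(Ker λ))`. -/
def congIdeal {O T : Type} [CommRing O] [CommRing T] [Algebra O T]
    (lam : T →ₐ[O] O) : Ideal O :=
  Ideal.map lam.toRingHom (Submodule.annihilator (RingHom.ker lam.toRingHom))

/-- The cotangent congruence module `C_1^λ(T) = ℘_λ/℘_λ²`, as an `O`-module. -/
abbrev C1 {O T : Type} [CommRing O] [CommRing T] [Algebra O T] (lam : T →ₐ[O] O) :=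
  ↥(Submodule.restrictScalars O (RingHom.ker lam.toRingHom)) ⧸
    (Submodule.comap (Submodule.restrictScalars O (RingHom.ker lam.toRingHom)).subtype
      (Submodule.restrictScalars O (RingHom.ker lam.toRingHom ^ 2)))

theorem statement11
    (O : Type) [CommRing O] [IsDomain O] [IsDiscreteValuationRing O] [CharZero O]
    (K : Type) [Field K] [Algebra O K] [IsFractionRing O K]
    (T : Type) [CommRing T] [IsLocalRing T] [Algebra O T] [Module.Finite O T]
    (TK : Type) [CommRing TK] [Algebra T TK] [Algebra O TK] [Algebra K TK]
    [IsScalarTower O T TK] [IsScalarTower O K TK]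
    [IsLocalization (Algebra.algebraMapSubmonoid T O⁰) TK]
    [IsSemisimpleRing TK]
    (lam : T →ₐ[O] O) (hlam : Function.Surjective lam) :
    fittingIdeal O (C1 lam) ≤ congIdeal lam := by
  classical
  set P : Ideal T := RingHom.ker lam.toRingHom with hPdef
  have hNO : IsNoetherianRing O := inferInstance
  have hNT : IsNoetherianRing T := Algebra.FiniteType.isNoetherianRing O T
  rw [fittingIdeal, Ideal.span_le]
  rintro d ⟨n, g, B, hspan, hrel, rfl⟩
  choose y hy using fun i =>
    Submodule.Quotient.mk_surjective
      (Submodule.comap (Submodule.restrictScalars O (RingHom.ker lam.toRingHom)).subtype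
        (Submodule.restrictScalars O (RingHom.ker lam.toRingHom ^ 2))) (g i)
  set x : Fin n → T := fun i => ((y i : ↥(Submodule.restrictScalars O P)) : T) with hxdef
  have hxP : ∀ i, x i ∈ P := fun i => (y i).2
  -- every element of P is a span-combination of the x i modulo P ^ 2
  have hkey : ∀ z ∈ P, ∃ c : Fin n → O, z - ∑ i, c i • x i ∈ P ^ 2 := by
    intro z hz
    set z' : ↥(Submodule.restrictScalars O P) := ⟨z, hz⟩ with hz'
    have hmem : (Submodule.Quotient.mk z' : C1 lam) ∈
        Submodule.span O (Set.range g) := by rw [hspan]; trivial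
    obtain ⟨c, hc⟩ := (Submodule.mem_span_range_iff_exists_fun (R := O)).1 hmem
    refine ⟨c, ?_⟩
    have h0 : (Submodule.Quotient.mk (z' - ∑ i, c i • y i) : C1 lam) = 0 := by
      rw [Submodule.Quotient.mk_sub]
      have : (Submodule.Quotient.mk (∑ i, c i • y i) : C1 lam) = ∑ i, c i • g i := by
        rw [← Submodule.mkQ_apply, map_sum]
        simp only [map_smul, Submodule.mkQ_apply, hy]
      rw [this, ← hc, sub_self]
    have h1 := (Submodule.Quotient.mk_eq_zero _).1 h0
    have h2 : ((z' - ∑ i, c i • y i : ↥(Submodule.restrictScalars O P)) : T) ∈ P ^ 2 := h1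
    push_cast at h2; exact h2
  set N : Ideal T := Ideal.span (Set.range x) with hNdef
  have hNle : N ≤ P := by
    rw [hNdef, Ideal.span_le]
    rintro _ ⟨i, rfl⟩; exact hxP i
  have hPneTop : P ≠ ⊤ := RingHom.ker_ne_top _
  have hPm : P ≤ IsLocalRing.maximalIdeal T := IsLocalRing.le_maximalIdeal hPneTop
  have hP2 : P ^ 2 ≤ IsLocalRing.maximalIdeal T • P := by
    rw [pow_two, Ideal.smul_eq_mul]
    exact Ideal.mul_mono hPm le_rfl
  have hPN : P ≤ N := by
    refine Submodule.le_of_le_smul_of_le_jacobson_bot (IsNoetherian.noetherian P)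
      (le_of_eq (IsLocalRing.jacobson_eq_maximalIdeal (⊥ : Ideal T) bot_ne_top).symm) ?_
    intro z hz
    obtain ⟨c, hc⟩ := hkey z hz
    have hz1 : z = (z - ∑ i, c i • x i) + ∑ i, c i • x i := by ring
    rw [hz1]
    refine Submodule.add_mem _ (Submodule.mem_sup_right (hP2 hc)) (Submodule.mem_sup_left ?_)
    refine Submodule.sum_mem _ fun i _ => ?_
    have : c i • x i = algebraMap O T (c i) • x i := by
      rw [algebraMap_smul]
    rw [this]
    exact Submodule.smul_mem _ _ (Ideal.subset_span ⟨i, rfl⟩)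
  have hPeq : P = N := le_antisymm hPN hNle
  -- lift the relations: for each j, ∑ i, algebraMap O T (B i j) * x i ∈ P ^ 2
  have hrelT : ∀ j, ∑ i, algebraMap O T (B i j) * x i ∈ P ^ 2 := by
    intro j
    have h0 : (Submodule.Quotient.mk (∑ i, B i j • y i) : C1 lam) = 0 := by
      rw [← Submodule.mkQ_apply, map_sum]
      simp only [map_smul, Submodule.mkQ_apply, hy]
      exact hrel j
    have h1 := (Submodule.Quotient.mk_eq_zero _).1 h0
    have h2 : ((∑ i, B i j • y i : ↥(Submodule.restrictScalars O P)) : T) ∈ P ^ 2 := h1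
    have h3 : ((∑ i, B i j • y i : ↥(Submodule.restrictScalars O P)) : T)
        = ∑ i, algebraMap O T (B i j) * x i := by
      push_cast
      try exact Finset.sum_congr rfl fun i _ => by rw [Algebra.smul_def]; rfl
      try exact Finset.sum_congr rfl fun i _ => by rw [Algebra.smul_def]
    rwa [h3] at h2
  -- write each relation as a P-combination of the x i
  have hrelc : ∀ j, ∃ c : Fin n →₀ T, (∀ i, c i ∈ P) ∧
      ∑ i, c i • x i = ∑ i, algebraMap O T (B i j) * x i := by
    intro j
    have hmem : ∑ i, algebraMap O T (B i j) * x i ∈ P • Submodule.span T (Set.range x) := by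
      have : P ^ 2 = P • Submodule.span T (Set.range x) := by
        rw [pow_two, hPeq, Ideal.smul_eq_mul]
      rw [← this]; exact hrelT j
    obtain ⟨c, hc1, hc2⟩ := (Submodule.mem_ideal_smul_span_iff_exists_sum P x _).1 hmem
    refine ⟨c, fun i => hc1 i, ?_⟩
    rw [← hc2, Finsupp.sum_fintype _ _ (fun i => zero_smul T (x i))]
  choose c hcP hcx using hrelc
  set A : Matrix (Fin n) (Fin n) T := fun i j => algebraMap O T (B i j) - c j i with hA
  have hAx : ∀ j, ∑ i, A i j * x i = 0 := by
    intro j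
    have : ∑ i, A i j * x i
        = (∑ i, algebraMap O T (B i j) * x i) - ∑ i, c j i * x i := by
      rw [← Finset.sum_sub_distrib]
      exact Finset.sum_congr rfl fun i _ => by rw [hA]; ring
    rw [this, ← hcx j, sub_eq_zero]
    exact Finset.sum_congr rfl fun i _ => (smul_eq_mul _ _).symm
  -- det A annihilates all x i
  have hmv : A.transpose.mulVec x = 0 := by
    funext j
    simp only [Matrix.mulVec, dotProduct, Matrix.transpose_apply, Pi.zero_apply]
    exact hAx j
  have hdet : ∀ i, A.det * x i = 0 := by
    have h := congrArg (fun w => (Matrix.adjugate A.transpose).mulVec w) hmv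
    simp only [Matrix.mulVec_mulVec, Matrix.adjugate_mul, Matrix.mulVec_zero,
      Matrix.smul_mulVec, Matrix.one_mulVec, Matrix.det_transpose] at h
    intro i
    have := congrFun h i
    simpa [smul_eq_mul] using this
  have hAnn : A.det ∈ Submodule.annihilator P := by
    rw [hPeq, hNdef]
    have : (Ideal.span (Set.range x)) = Submodule.span T (Set.range x) := rfl
    rw [this, Submodule.mem_annihilator_span]
    rintro ⟨_, ⟨i, rfl⟩⟩
    simpa [smul_eq_mul] using hdet i
  -- push through lam
  have hmapA : A.map lam.toRingHom = B := by
    funext i j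
    have h2 : lam (c j i) = 0 := hcP j i
    rw [Matrix.map_apply]
    simp [hA, Matrix.map_apply, h2, Algebra.algebraMap_self_apply]
  have hdet2 : lam.toRingHom A.det = B.det := by
    rw [RingHom.map_det, RingHom.mapMatrix_apply, hmapA]
  rw [← hdet2]
  exact Ideal.mem_map_of_mem _ hAnn
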